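/- arXiv:2506.22281 — 2 statements merged into one kernel-verified Lean document; each statement's English description precedes it below -/
import Mathlib

section
/- The map (V_L, V_R) ↦ ((V_A ∩ V_L, V_A ∩ V_R), (V_B ∩ V_L, V_B ∩ V_R)) is a bijection from the set of internal partitions (V_L, V_R) of G in which all four sets V_A ∩ V_L, V_A ∩ V_R, V_B ∩ V_L, V_B ∩ V_R are nonempty, onto the set of pairs ((S, R), (S', R')) where (S, R) is a proper bipartition of V_A, (S', R') is a proper bipartition of V_B, and q_S ≥ p_{S'}. In particular, the two sets have equal cardinality. -/
open Finset

variable {V : Type*} [Fintype V] [DecidableEq V]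

/-- `nbr G A v = |N_A(v)|`, the number of neighbors of `v` lying in `A`. -/
def nbr (G : SimpleGraph V) [DecidableRel G.Adj] (A : Finset V) (v : V) : ℕ :=
  (G.neighborFinset v ∩ A).card

/-- The query vector `q_S` (2 entries per vertex) associated to a bipartition `(S, R)` of `V_A`;
vertices outside `S ∪ R` are exactly those of `V_B`. -/
def qvec (G : SimpleGraph V) [DecidableRel G.Adj] (n : ℕ) (S R : Finset V) (v : V) :
    Fin 2 → ℤ :=
  if v ∈ S then ![(nbr G S v : ℤ) - (nbr G R v : ℤ), (n : ℤ)]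
  else if v ∈ R then ![(n : ℤ), (nbr G R v : ℤ) - (nbr G S v : ℤ)]
  else ![(nbr G S v : ℤ) - (nbr G R v : ℤ), (nbr G R v : ℤ) - (nbr G S v : ℤ)]

/-- The data vector `p_{S'}` (2 entries per vertex) associated to a bipartition `(S', R')`
of `V_B`; vertices outside `S' ∪ R'` are exactly those of `V_A`. -/
def pvec (G : SimpleGraph V) [DecidableRel G.Adj] (n : ℕ) (S' R' : Finset V) (v : V) :
    Fin 2 → ℤ :=
  if v ∈ S' then ![(nbr G R' v : ℤ) - (nbr G S' v : ℤ), -(n : ℤ)]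
  else if v ∈ R' then ![-(n : ℤ), (nbr G S' v : ℤ) - (nbr G R' v : ℤ)]
  else ![(nbr G R' v : ℤ) - (nbr G S' v : ℤ), (nbr G S' v : ℤ) - (nbr G R' v : ℤ)]

/-- An internal partition of `G`: a proper bipartition `(V_L, V_R)` of the vertex set such that
every vertex has at least as many neighbors in its own part as in the other part. -/
def IsInternalPartition (G : SimpleGraph V) [DecidableRel G.Adj] (VL VR : Finset V) : Prop :=
  Disjoint VL VR ∧ VL ∪ VR = Finset.univ ∧ VL.Nonempty ∧ VR.Nonempty ∧
    (∀ v ∈ VL, nbr G VR v ≤ nbr G VL v) ∧ (∀ v ∈ VR, nbr G VL v ≤ nbr G VR v)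

/-! Write `V_L = S ∪ S'` and `V_R = R ∪ R'`. At a vertex `v` the entries `±n` of `q_S` and
`p_{S'}` never bind, because every `|N_A(v)|` is at most `|V| = n`; the remaining entry of
`q_S - p_{S'}` is `|N_{V_L}(v)| - |N_{V_R}(v)|` when `v ∈ V_L` and its negative when `v ∈ V_R`.
So `q_S ≥ p_{S'}` is exactly the internal-partition condition for `(V_L, V_R)`, and intersecting
with `V_A`, `V_B` is inverse to taking these unions. -/

section

variable {α : Type*} [DecidableEq α]

lemma Finset.inter_union_eq_left_of_subset_of_disjoint {A X Y : Finset α} (hX : X ⊆ A)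
    (hY : Disjoint A Y) : A ∩ (X ∪ Y) = X := by
  rw [inter_union_distrib_left, inter_eq_right.2 hX, disjoint_iff_inter_eq_empty.1 hY,
    union_empty]

lemma Finset.inter_union_eq_right_of_disjoint_of_subset {A X Y : Finset α} (hX : Disjoint A X)
    (hY : Y ⊆ A) : A ∩ (X ∪ Y) = Y := by
  rw [union_comm, inter_union_eq_left_of_subset_of_disjoint hY hX]

def IsProperBipartition (W P Q : Finset α) : Prop :=
  Disjoint P Q ∧ P ∪ Q = W ∧ P.Nonempty ∧ Q.Nonempty

lemma isProperBipartition_inter [Fintype α] {W P Q : Finset α} (hd : Disjoint P Q)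
    (hu : P ∪ Q = univ) (hP : (W ∩ P).Nonempty) (hQ : (W ∩ Q).Nonempty) :
    IsProperBipartition W (W ∩ P) (W ∩ Q) :=
  ⟨hd.mono inter_subset_right inter_subset_right,
    by rw [← inter_union_distrib_left, hu, inter_univ], hP, hQ⟩

def splitParts (VA VB : Finset α) (P : Finset α × Finset α) :
    (Finset α × Finset α) × (Finset α × Finset α) :=
  ((VA ∩ P.1, VA ∩ P.2), (VB ∩ P.1, VB ∩ P.2))

def mergeParts (Q : (Finset α × Finset α) × (Finset α × Finset α)) :
    Finset α × Finset α :=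
  (Q.1.1 ∪ Q.2.1, Q.1.2 ∪ Q.2.2)

lemma mergeParts_splitParts [Fintype α] {VA VB : Finset α} (hcover : VA ∪ VB = univ)
    (P : Finset α × Finset α) : mergeParts (splitParts VA VB P) = P := by
  simp only [mergeParts, splitParts, ← union_inter_distrib_right, hcover, univ_inter]

lemma splitParts_mergeParts {VA VB : Finset α} (hAB : Disjoint VA VB)
    {Q : (Finset α × Finset α) × (Finset α × Finset α)}
    (hA : Q.1.1 ∪ Q.1.2 ⊆ VA) (hB : Q.2.1 ∪ Q.2.2 ⊆ VB) :
    splitParts VA VB (mergeParts Q) = Q := by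
  obtain ⟨hSA, hRA⟩ := union_subset_iff.1 hA
  obtain ⟨hSB, hRB⟩ := union_subset_iff.1 hB
  simp only [splitParts, mergeParts,
    inter_union_eq_left_of_subset_of_disjoint hSA (hAB.mono_right hSB),
    inter_union_eq_left_of_subset_of_disjoint hRA (hAB.mono_right hRB),
    inter_union_eq_right_of_disjoint_of_subset (hAB.symm.mono_right hSA) hSB,
    inter_union_eq_right_of_disjoint_of_subset (hAB.symm.mono_right hRA) hRB]

end

section

variable (G : SimpleGraph V) [DecidableRel G.Adj]

lemma nbr_le_card (A : Finset V) (v : V) : nbr G A v ≤ Fintype.card V :=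
  card_le_univ _

lemma nbr_union {A B : Finset V} (h : Disjoint A B) (v : V) :
    nbr G (A ∪ B) v = nbr G A v + nbr G B v := by
  rw [nbr, inter_union_distrib_left,
    card_union_of_disjoint (h.mono inter_subset_right inter_subset_right)]
  rfl

variable {n : ℕ} {S R S' R' VA VB : Finset V}

lemma pvec_zero_le_qvec_zero_iff (hn : Fintype.card V ≤ n) (v : V) :
    pvec G n S' R' v 0 ≤ qvec G n S R v 0 ↔
      (v ∈ R ∧ v ∉ S) ∨ (v ∈ R' ∧ v ∉ S') ∨
        nbr G R v + nbr G R' v ≤ nbr G S v + nbr G S' v := by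
  have := nbr_le_card G S v; have := nbr_le_card G R v
  have := nbr_le_card G S' v; have := nbr_le_card G R' v
  unfold pvec qvec
  split_ifs <;> simp_all <;> omega

lemma pvec_one_le_qvec_one_iff (hn : Fintype.card V ≤ n) (v : V) :
    pvec G n S' R' v 1 ≤ qvec G n S R v 1 ↔
      v ∈ S ∨ v ∈ S' ∨ nbr G S v + nbr G S' v ≤ nbr G R v + nbr G R' v := by
  have := nbr_le_card G S v; have := nbr_le_card G R v
  have := nbr_le_card G S' v; have := nbr_le_card G R' v
  unfold pvec qvec
  split_ifs <;> simp_all <;> omega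

lemma forall_pvec_le_qvec_iff (hn : Fintype.card V ≤ n) (hSS' : Disjoint S S')
    (hRR' : Disjoint R R') (hdisj : Disjoint (S ∪ S') (R ∪ R'))
    (hcover : (S ∪ S') ∪ (R ∪ R') = univ) :
    (∀ v k, pvec G n S' R' v k ≤ qvec G n S R v k) ↔
      (∀ v ∈ S ∪ S', nbr G (R ∪ R') v ≤ nbr G (S ∪ S') v) ∧
        (∀ v ∈ R ∪ R', nbr G (S ∪ S') v ≤ nbr G (R ∪ R') v) := by
  have hvertex : ∀ v, (∀ k, pvec G n S' R' v k ≤ qvec G n S R v k) ↔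
      (v ∈ S ∪ S' → nbr G (R ∪ R') v ≤ nbr G (S ∪ S') v) ∧
        (v ∈ R ∪ R' → nbr G (S ∪ S') v ≤ nbr G (R ∪ R') v) := fun v => by
    have hL : v ∈ S ∪ S' ↔ v ∉ R ∪ R' :=
      ⟨fun h => disjoint_left.1 hdisj h, (mem_union.1 (hcover ▸ mem_univ v)).resolve_right⟩
    have hR : (v ∈ R ∧ v ∉ S) ∨ (v ∈ R' ∧ v ∉ S') ↔ v ∈ R ∪ R' := by
      have : v ∈ R ∪ R' → v ∉ S ∪ S' := fun h => disjoint_right.1 hdisj h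
      simp only [mem_union, not_or] at this ⊢
      tauto
    rw [Fin.forall_fin_two, pvec_zero_le_qvec_zero_iff G hn, pvec_one_le_qvec_one_iff G hn,
      ← or_assoc, hR, ← or_assoc, ← mem_union, hL, nbr_union G hSS', nbr_union G hRR']
    tauto
  simp only [hvertex, forall_and]

def internalPartitionsCrossing (VA VB : Finset V) : Set (Finset V × Finset V) :=
  {P | IsInternalPartition G P.1 P.2 ∧ (VA ∩ P.1).Nonempty ∧ (VA ∩ P.2).Nonempty ∧
    (VB ∩ P.1).Nonempty ∧ (VB ∩ P.2).Nonempty}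

def dominatingBipartitionPairs (n : ℕ) (VA VB : Finset V) :
    Set ((Finset V × Finset V) × (Finset V × Finset V)) :=
  {Q | IsProperBipartition VA Q.1.1 Q.1.2 ∧ IsProperBipartition VB Q.2.1 Q.2.2 ∧
    ∀ v k, pvec G n Q.2.1 Q.2.2 v k ≤ qvec G n Q.1.1 Q.1.2 v k}

lemma mapsTo_splitParts (hn : Fintype.card V ≤ n) (hAB : Disjoint VA VB)
    (hcover : VA ∪ VB = univ) :
    Set.MapsTo (splitParts VA VB) (internalPartitionsCrossing G VA VB)
      (dominatingBipartitionPairs G n VA VB) := by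
  rintro ⟨VL, VR⟩ ⟨⟨hd, hu, -, -, hintL, hintR⟩, hAL, hAR, hBL, hBR⟩
  have hsplit : ∀ X : Finset V, (VA ∩ X) ∪ (VB ∩ X) = X := fun X => by
    rw [← union_inter_distrib_right, hcover, univ_inter]
  refine ⟨isProperBipartition_inter hd hu hAL hAR, isProperBipartition_inter hd hu hBL hBR, ?_⟩
  dsimp only [splitParts]
  rw [forall_pvec_le_qvec_iff G hn (hAB.mono inter_subset_left inter_subset_left)
    (hAB.mono inter_subset_left inter_subset_left) (by rwa [hsplit, hsplit])
    (by rw [hsplit, hsplit, hu]), hsplit, hsplit]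
  exact ⟨hintL, hintR⟩

lemma mapsTo_mergeParts (hn : Fintype.card V ≤ n) (hAB : Disjoint VA VB)
    (hcover : VA ∪ VB = univ) :
    Set.MapsTo mergeParts (dominatingBipartitionPairs G n VA VB)
      (internalPartitionsCrossing G VA VB) := by
  rintro ⟨⟨S, R⟩, ⟨S', R'⟩⟩ ⟨⟨hSR, hA, hS, hR⟩, ⟨hSR', hB, hS', hR'⟩, hpq⟩
  have hSS' : Disjoint S S' := hAB.mono (hA ▸ subset_union_left) (hB ▸ subset_union_left)
  have hRR' : Disjoint R R' := hAB.mono (hA ▸ subset_union_right) (hB ▸ subset_union_right)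
  have hdisj : Disjoint (S ∪ S') (R ∪ R') := by
    refine disjoint_union_left.2 ⟨disjoint_union_right.2 ⟨hSR, ?_⟩,
      disjoint_union_right.2 ⟨?_, hSR'⟩⟩
    · exact hAB.mono (hA ▸ subset_union_left) (hB ▸ subset_union_right)
    · exact hAB.symm.mono (hB ▸ subset_union_left) (hA ▸ subset_union_right)
  have hunion : (S ∪ S') ∪ (R ∪ R') = univ := by
    rw [union_union_union_comm, hA, hB, hcover]
  have hparts := splitParts_mergeParts hAB (Q := ((S, R), (S', R'))) hA.le hB.le
  simp only [splitParts, mergeParts, Prod.mk.injEq] at hparts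
  obtain ⟨⟨hAS, hAR⟩, hBS, hBR⟩ := hparts
  refine ⟨⟨hdisj, hunion, hS.mono subset_union_left, hR.mono subset_union_left,
    (forall_pvec_le_qvec_iff G hn hSS' hRR' hdisj hunion).1 hpq⟩, ?_⟩
  simp only [mergeParts, hAS, hAR, hBS, hBR]
  exact ⟨hS, hR, hS', hR'⟩

lemma bijOn_splitParts (hn : Fintype.card V ≤ n) (hAB : Disjoint VA VB)
    (hcover : VA ∪ VB = univ) :
    Set.BijOn (splitParts VA VB) (internalPartitionsCrossing G VA VB)
      (dominatingBipartitionPairs G n VA VB) :=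
  Set.InvOn.bijOn
    ⟨fun P _ => mergeParts_splitParts hcover P,
      fun _ ⟨⟨_, hA, _⟩, ⟨_, hB, _⟩, _⟩ => splitParts_mergeParts hAB hA.le hB.le⟩
    (mapsTo_splitParts G hn hAB hcover) (mapsTo_mergeParts G hn hAB hcover)

end

/-- the map `(V_L, V_R) ↦ ((V_A ∩ V_L, V_A ∩ V_R), (V_B ∩ V_L, V_B ∩ V_R))`
is a bijection from the set of internal partitions of `G` in which all four intersections
are nonempty onto the set of pairs of proper bipartitions `((S, R), (S', R'))` of `V_A`
and `V_B` with `q_S ≥ p_{S'}`; in particular the two sets have equal cardinality. -/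
theorem stmt_6 (G : SimpleGraph V) [DecidableRel G.Adj]
    (n : ℕ) (hn : n = Fintype.card V)
    (VA VB : Finset V) (hABdisj : Disjoint VA VB) (hABuniv : VA ∪ VB = Finset.univ) :
    Set.BijOn
      (fun P : Finset V × Finset V => ((VA ∩ P.1, VA ∩ P.2), (VB ∩ P.1, VB ∩ P.2)))
      {P : Finset V × Finset V | IsInternalPartition G P.1 P.2 ∧
        (VA ∩ P.1).Nonempty ∧ (VA ∩ P.2).Nonempty ∧
        (VB ∩ P.1).Nonempty ∧ (VB ∩ P.2).Nonempty}
      {Q : (Finset V × Finset V) × (Finset V × Finset V) |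
        (Disjoint Q.1.1 Q.1.2 ∧ Q.1.1 ∪ Q.1.2 = VA ∧ Q.1.1.Nonempty ∧ Q.1.2.Nonempty) ∧
        (Disjoint Q.2.1 Q.2.2 ∧ Q.2.1 ∪ Q.2.2 = VB ∧ Q.2.1.Nonempty ∧ Q.2.2.Nonempty) ∧
        (∀ v : V, ∀ k : Fin 2, pvec G n Q.2.1 Q.2.2 v k ≤ qvec G n Q.1.1 Q.1.2 v k)} ∧
    Set.ncard {P : Finset V × Finset V | IsInternalPartition G P.1 P.2 ∧
        (VA ∩ P.1).Nonempty ∧ (VA ∩ P.2).Nonempty ∧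
        (VB ∩ P.1).Nonempty ∧ (VB ∩ P.2).Nonempty} =
      Set.ncard {Q : (Finset V × Finset V) × (Finset V × Finset V) |
        (Disjoint Q.1.1 Q.1.2 ∧ Q.1.1 ∪ Q.1.2 = VA ∧ Q.1.1.Nonempty ∧ Q.1.2.Nonempty) ∧
        (Disjoint Q.2.1 Q.2.2 ∧ Q.2.1 ∪ Q.2.2 = VB ∧ Q.2.1.Nonempty ∧ Q.2.2.Nonempty) ∧
        (∀ v : V, ∀ k : Fin 2, pvec G n Q.2.1 Q.2.2 v k ≤ qvec G n Q.1.1 Q.1.2 v k)} := by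
  have h := bijOn_splitParts G hn.ge hABdisj hABuniv
  exact ⟨h, h.ncard_eq⟩
end

section
/- The map (V_L, V_R) ↦ ((V_A ∩ V_L, V_A ∩ V_R), (V_B ∩ V_L, V_B ∩ V_R)) is a bijection from the set of feasible interval-constrained cuts (V_L, V_R) of G in which all four sets V_A ∩ V_L, V_A ∩ V_R, V_B ∩ V_L, V_B ∩ V_R are nonempty, onto the set of pairs ((S, R), (S', R')) where (S, R) is a proper bipartition of V_A, (S', R') is a proper bipartition of V_B, and q_S ≥ p_{S'} + r. In particular, the two sets have equal cardinality. -/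
open Finset

variable {V : Type*} [Fintype V] [DecidableEq V]

/-- A feasible interval-constrained cut: a proper bipartition `(V_L, V_R)` of `V` satisfying
the vertex-specific interval degree constraints. -/
def IsFeasibleCut (G : SimpleGraph V) [DecidableRel G.Adj]
    (a' a'' b' b'' c' c'' d' d'' : V → ℕ) (VL VR : Finset V) : Prop :=
  Disjoint VL VR ∧ VL ∪ VR = Finset.univ ∧ VL.Nonempty ∧ VR.Nonempty ∧
    (∀ v ∈ VL, (a' v ≤ nbr G VL v ∧ nbr G VL v ≤ a'' v) ∧
      (b' v ≤ nbr G VR v ∧ nbr G VR v ≤ b'' v)) ∧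
    (∀ v ∈ VR, (c' v ≤ nbr G VR v ∧ nbr G VR v ≤ c'' v) ∧
      (d' v ≤ nbr G VL v ∧ nbr G VL v ≤ d'' v))

/-- The constraint vector `r` (8 entries per vertex). -/
def rvec (a' a'' b' b'' c' c'' d' d'' : V → ℕ) (v : V) : Fin 8 → ℤ :=
  ![(a' v : ℤ), -(a'' v : ℤ), (b' v : ℤ), -(b'' v : ℤ),
    (c' v : ℤ), -(c'' v : ℤ), (d' v : ℤ), -(d'' v : ℤ)]

/-- The query vector `q_S` (8 entries per vertex) associated to a bipartition `(S, R)` of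
`V_A`; vertices outside `S ∪ R` are exactly those of `V_B`. -/
def qvec8 (G : SimpleGraph V) [DecidableRel G.Adj] (n : ℕ) (S R : Finset V) (v : V) :
    Fin 8 → ℤ :=
  if v ∈ S then
    ![(nbr G S v : ℤ), -(nbr G S v : ℤ), (nbr G R v : ℤ), -(nbr G R v : ℤ),
      (2 * n : ℤ), (2 * n : ℤ), (2 * n : ℤ), (2 * n : ℤ)]
  else if v ∈ R then
    ![(2 * n : ℤ), (2 * n : ℤ), (2 * n : ℤ), (2 * n : ℤ),
      (nbr G R v : ℤ), -(nbr G R v : ℤ), (nbr G S v : ℤ), -(nbr G S v : ℤ)]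
  else
    ![(nbr G S v : ℤ), -(nbr G S v : ℤ), (nbr G R v : ℤ), -(nbr G R v : ℤ),
      (nbr G R v : ℤ), -(nbr G R v : ℤ), (nbr G S v : ℤ), -(nbr G S v : ℤ)]

/-- The data vector `p_{S'}` (8 entries per vertex) associated to a bipartition `(S', R')`
of `V_B`; vertices outside `S' ∪ R'` are exactly those of `V_A`. -/
def pvec8 (G : SimpleGraph V) [DecidableRel G.Adj] (n : ℕ) (S' R' : Finset V) (v : V) :
    Fin 8 → ℤ :=
  if v ∈ S' then
    ![-(nbr G S' v : ℤ), (nbr G S' v : ℤ), -(nbr G R' v : ℤ), (nbr G R' v : ℤ),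
      -(2 * n : ℤ), -(2 * n : ℤ), -(2 * n : ℤ), -(2 * n : ℤ)]
  else if v ∈ R' then
    ![-(2 * n : ℤ), -(2 * n : ℤ), -(2 * n : ℤ), -(2 * n : ℤ),
      -(nbr G R' v : ℤ), (nbr G R' v : ℤ), -(nbr G S' v : ℤ), (nbr G S' v : ℤ)]
  else
    ![-(nbr G S' v : ℤ), (nbr G S' v : ℤ), -(nbr G R' v : ℤ), (nbr G R' v : ℤ),
      -(nbr G R' v : ℤ), (nbr G R' v : ℤ), -(nbr G S' v : ℤ), (nbr G S' v : ℤ)]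


lemma nbr_le_n (G : SimpleGraph V) [DecidableRel G.Adj] (A : Finset V) (v : V) :
    nbr G A v ≤ Fintype.card V :=
  le_trans (Finset.card_le_card Finset.inter_subset_right) (Finset.card_le_univ A)

lemma nbr_union_eq (G : SimpleGraph V) [DecidableRel G.Adj] {A B : Finset V}
    (h : Disjoint A B) (v : V) : nbr G (A ∪ B) v = nbr G A v + nbr G B v := by
  unfold nbr
  rw [Finset.inter_union_distrib_left,
    Finset.card_union_of_disjoint (h.mono Finset.inter_subset_right Finset.inter_subset_right)]

theorem aux_bij (G : SimpleGraph V) [DecidableRel G.Adj]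
    (n : ℕ) (hn : n = Fintype.card V)
    (a' a'' b' b'' c' c'' d' d'' : V → ℕ)
    (ha' : ∀ v, a' v ≤ n) (ha'' : ∀ v, a'' v ≤ n) (hb' : ∀ v, b' v ≤ n) (hb'' : ∀ v, b'' v ≤ n)
    (hc' : ∀ v, c' v ≤ n) (hc'' : ∀ v, c'' v ≤ n) (hd' : ∀ v, d' v ≤ n) (hd'' : ∀ v, d'' v ≤ n)
    (VA VB : Finset V) (hABdisj : Disjoint VA VB) (hABuniv : VA ∪ VB = Finset.univ) :
    Set.BijOn
      (fun P : Finset V × Finset V => ((VA ∩ P.1, VA ∩ P.2), (VB ∩ P.1, VB ∩ P.2)))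
      {P : Finset V × Finset V |
        IsFeasibleCut G a' a'' b' b'' c' c'' d' d'' P.1 P.2 ∧
        (VA ∩ P.1).Nonempty ∧ (VA ∩ P.2).Nonempty ∧
        (VB ∩ P.1).Nonempty ∧ (VB ∩ P.2).Nonempty}
      {Q : (Finset V × Finset V) × (Finset V × Finset V) |
        (Disjoint Q.1.1 Q.1.2 ∧ Q.1.1 ∪ Q.1.2 = VA ∧ Q.1.1.Nonempty ∧ Q.1.2.Nonempty) ∧
        (Disjoint Q.2.1 Q.2.2 ∧ Q.2.1 ∪ Q.2.2 = VB ∧ Q.2.1.Nonempty ∧ Q.2.2.Nonempty) ∧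
        (∀ v : V, ∀ k : Fin 8,
          pvec8 G n Q.2.1 Q.2.2 v k + rvec a' a'' b' b'' c' c'' d' d'' v k ≤
            qvec8 G n Q.1.1 Q.1.2 v k)} := by
  have hnbr : ∀ (A : Finset V) (v : V), nbr G A v ≤ n := fun A v => hn ▸ nbr_le_n G A v
  have hsplit : ∀ X : Finset V, VA ∩ X ∪ VB ∩ X = X := fun X => by
    rw [← Finset.union_inter_distrib_right, hABuniv, Finset.univ_inter]
  refine ⟨?_, ?_, ?_⟩
  · -- MapsTo
    rintro ⟨VL, VR⟩ ⟨hfeas, hSne, hRne, hS'ne, hR'ne⟩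
    unfold IsFeasibleCut at hfeas
    obtain ⟨hdisj, huniv, -, -, hL, hR⟩ := hfeas
    simp only [Set.mem_setOf_eq]
    have hdAB_L : Disjoint (VA ∩ VL) (VB ∩ VL) :=
      hABdisj.mono Finset.inter_subset_left Finset.inter_subset_left
    have hdAB_R : Disjoint (VA ∩ VR) (VB ∩ VR) :=
      hABdisj.mono Finset.inter_subset_left Finset.inter_subset_left
    have hnL : ∀ w, nbr G VL w = nbr G (VA ∩ VL) w + nbr G (VB ∩ VL) w := by
      intro w
      conv_lhs => rw [← hsplit VL]
      exact nbr_union_eq G hdAB_L w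
    have hnR : ∀ w, nbr G VR w = nbr G (VA ∩ VR) w + nbr G (VB ∩ VR) w := by
      intro w
      conv_lhs => rw [← hsplit VR]
      exact nbr_union_eq G hdAB_R w
    refine ⟨⟨hdisj.mono Finset.inter_subset_right Finset.inter_subset_right,
        by rw [← Finset.inter_union_distrib_left, huniv, Finset.inter_univ], hSne, hRne⟩,
      ⟨hdisj.mono Finset.inter_subset_right Finset.inter_subset_right,
        by rw [← Finset.inter_union_distrib_left, huniv, Finset.inter_univ], hS'ne, hR'ne⟩, ?_⟩
    intro v
    have hvAB : v ∈ VA ∨ v ∈ VB := Finset.mem_union.mp (hABuniv ▸ Finset.mem_univ v)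
    have hvLR : v ∈ VL ∨ v ∈ VR := Finset.mem_union.mp (huniv ▸ Finset.mem_univ v)
    have bS := hnbr (VA ∩ VL) v
    have bT := hnbr (VA ∩ VR) v
    have bS' := hnbr (VB ∩ VL) v
    have bT' := hnbr (VB ∩ VR) v
    have g1 := ha' v; have g2 := ha'' v; have g3 := hb' v; have g4 := hb'' v
    have g5 := hc' v; have g6 := hc'' v; have g7 := hd' v; have g8 := hd'' v
    rcases hvAB with hvA | hvB <;> rcases hvLR with hvL | hvR
    · have hnotB : v ∉ VB := Finset.disjoint_left.mp hABdisj hvA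
      have hcon := hL v hvL
      rw [hnL v, hnR v] at hcon
      simp only [qvec8, pvec8, rvec, Finset.mem_inter, hvA, hvL, hnotB, if_true, if_false,
        and_true, and_false, true_and, false_and, and_self, not_false_iff, not_true,
        if_pos, if_neg, Fin.forall_fin_succ, Fin.forall_fin_zero_pi, IsEmpty.forall_iff, Matrix.cons_val_one, Matrix.head_cons,
        Matrix.cons_val_zero, Matrix.cons_val_succ]
      omega
    · have hnotB : v ∉ VB := Finset.disjoint_left.mp hABdisj hvA
      have hnotL : v ∉ VL := Finset.disjoint_right.mp hdisj hvR
      have hcon := hR v hvR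
      rw [hnL v, hnR v] at hcon
      simp only [qvec8, pvec8, rvec, Finset.mem_inter, hvA, hvR, hnotB, hnotL, if_true, if_false,
        and_true, and_false, true_and, false_and, and_self, not_false_iff, not_true,
        if_pos, if_neg, Fin.forall_fin_succ, Fin.forall_fin_zero_pi, IsEmpty.forall_iff, Matrix.cons_val_one, Matrix.head_cons,
        Matrix.cons_val_zero, Matrix.cons_val_succ]
      omega
    · have hnotA : v ∉ VA := Finset.disjoint_right.mp hABdisj hvB
      have hcon := hL v hvL
      rw [hnL v, hnR v] at hcon
      simp only [qvec8, pvec8, rvec, Finset.mem_inter, hvB, hvL, hnotA, if_true, if_false,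
        and_true, and_false, true_and, false_and, and_self, not_false_iff, not_true,
        if_pos, if_neg, Fin.forall_fin_succ, Fin.forall_fin_zero_pi, IsEmpty.forall_iff, Matrix.cons_val_one, Matrix.head_cons,
        Matrix.cons_val_zero, Matrix.cons_val_succ]
      omega
    · have hnotA : v ∉ VA := Finset.disjoint_right.mp hABdisj hvB
      have hnotL : v ∉ VL := Finset.disjoint_right.mp hdisj hvR
      have hcon := hR v hvR
      rw [hnL v, hnR v] at hcon
      simp only [qvec8, pvec8, rvec, Finset.mem_inter, hvB, hvR, hnotA, hnotL, if_true, if_false,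
        and_true, and_false, true_and, false_and, and_self, not_false_iff, not_true,
        if_pos, if_neg, Fin.forall_fin_succ, Fin.forall_fin_zero_pi, IsEmpty.forall_iff, Matrix.cons_val_one, Matrix.head_cons,
        Matrix.cons_val_zero, Matrix.cons_val_succ]
      omega
  · -- InjOn
    rintro ⟨VL1, VR1⟩ - ⟨VL2, VR2⟩ - heq
    simp only [Prod.mk.injEq] at heq
    obtain ⟨⟨e1, e2⟩, e3, e4⟩ := heq
    have hL12 : VL1 = VL2 := by
      rw [← hsplit VL1, ← hsplit VL2, e1, e3]
    have hR12 : VR1 = VR2 := by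
      rw [← hsplit VR1, ← hsplit VR2, e2, e4]
    simp [hL12, hR12]
  · -- SurjOn
    rintro ⟨⟨S, R⟩, S', R'⟩ ⟨⟨hd, hu, hSne, hRne⟩, ⟨hd', hu', hS'ne, hR'ne⟩, hineq⟩
    have hSA : S ⊆ VA := hu ▸ Finset.subset_union_left
    have hRA : R ⊆ VA := hu ▸ Finset.subset_union_right
    have hS'B : S' ⊆ VB := hu' ▸ Finset.subset_union_left
    have hR'B : R' ⊆ VB := hu' ▸ Finset.subset_union_right
    have hdSS' : Disjoint S S' := hABdisj.mono hSA hS'B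
    have hdRR' : Disjoint R R' := hABdisj.mono hRA hR'B
    have hdSR' : Disjoint S R' := hABdisj.mono hSA hR'B
    have hdS'R : Disjoint S' R := hABdisj.symm.mono hS'B hRA
    have hAS : VA ∩ (S ∪ S') = S := by
      rw [Finset.inter_union_distrib_left, Finset.inter_eq_right.mpr hSA,
        Finset.disjoint_iff_inter_eq_empty.mp (hABdisj.mono_right hS'B), Finset.union_empty]
    have hAR : VA ∩ (R ∪ R') = R := by
      rw [Finset.inter_union_distrib_left, Finset.inter_eq_right.mpr hRA,
        Finset.disjoint_iff_inter_eq_empty.mp (hABdisj.mono_right hR'B), Finset.union_empty]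
    have hBS : VB ∩ (S ∪ S') = S' := by
      rw [Finset.inter_union_distrib_left, Finset.inter_eq_right.mpr hS'B,
        Finset.disjoint_iff_inter_eq_empty.mp (hABdisj.symm.mono_right hSA), Finset.empty_union]
    have hBR : VB ∩ (R ∪ R') = R' := by
      rw [Finset.inter_union_distrib_left, Finset.inter_eq_right.mpr hR'B,
        Finset.disjoint_iff_inter_eq_empty.mp (hABdisj.symm.mono_right hRA), Finset.empty_union]
    refine ⟨(S ∪ S', R ∪ R'), ⟨?_, ?_, ?_, ?_, ?_⟩, ?_⟩
    · -- feasibility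
      unfold IsFeasibleCut
      refine ⟨?_, ?_, ?_, ?_, ?_, ?_⟩
      · exact Finset.disjoint_union_left.mpr
          ⟨Finset.disjoint_union_right.mpr ⟨hd, hdSR'⟩,
           Finset.disjoint_union_right.mpr ⟨hdS'R, hd'⟩⟩
      · rw [Finset.union_union_union_comm, hu, hu', hABuniv]
      · obtain ⟨x, hx⟩ := hSne; exact ⟨x, Finset.mem_union_left _ hx⟩
      · obtain ⟨x, hx⟩ := hRne; exact ⟨x, Finset.mem_union_left _ hx⟩
      · -- left constraints
        intro v hv
        rw [nbr_union_eq G hdSS' v, nbr_union_eq G hdRR' v]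
        have bS := hnbr S v; have bT := hnbr R v
        have bS' := hnbr S' v; have bT' := hnbr R' v
        rcases Finset.mem_union.mp hv with hvS | hvS'
        · have hvA : v ∈ VA := hSA hvS
          have hnotB : v ∉ VB := Finset.disjoint_left.mp hABdisj hvA
          have hnS' : v ∉ S' := fun h => hnotB (hS'B h)
          have hnR' : v ∉ R' := fun h => hnotB (hR'B h)
          have h8 := hineq v
          simp only [qvec8, pvec8, rvec, if_pos hvS, if_neg hnS', if_neg hnR',
            Fin.forall_fin_succ, Fin.forall_fin_zero_pi, IsEmpty.forall_iff, Matrix.cons_val_one, Matrix.head_cons,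
            Matrix.cons_val_zero, Matrix.cons_val_succ] at h8
          omega
        · have hvB : v ∈ VB := hS'B hvS'
          have hnotA : v ∉ VA := Finset.disjoint_right.mp hABdisj hvB
          have hnS : v ∉ S := fun h => hnotA (hSA h)
          have hnR : v ∉ R := fun h => hnotA (hRA h)
          have h8 := hineq v
          simp only [qvec8, pvec8, rvec, if_pos hvS', if_neg hnS, if_neg hnR,
            Fin.forall_fin_succ, Fin.forall_fin_zero_pi, IsEmpty.forall_iff, Matrix.cons_val_one, Matrix.head_cons,
            Matrix.cons_val_zero, Matrix.cons_val_succ] at h8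
          omega
      · -- right constraints
        intro v hv
        rw [nbr_union_eq G hdSS' v, nbr_union_eq G hdRR' v]
        have bS := hnbr S v; have bT := hnbr R v
        have bS' := hnbr S' v; have bT' := hnbr R' v
        rcases Finset.mem_union.mp hv with hvR | hvR'
        · have hvA : v ∈ VA := hRA hvR
          have hnotB : v ∉ VB := Finset.disjoint_left.mp hABdisj hvA
          have hnS : v ∉ S := Finset.disjoint_right.mp hd hvR
          have hnS' : v ∉ S' := fun h => hnotB (hS'B h)
          have hnR' : v ∉ R' := fun h => hnotB (hR'B h)
          have h8 := hineq v
          simp only [qvec8, pvec8, rvec, if_pos hvR, if_neg hnS, if_neg hnS', if_neg hnR',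
            Fin.forall_fin_succ, Fin.forall_fin_zero_pi, IsEmpty.forall_iff, Matrix.cons_val_one, Matrix.head_cons,
            Matrix.cons_val_zero, Matrix.cons_val_succ] at h8
          omega
        · have hvB : v ∈ VB := hR'B hvR'
          have hnotA : v ∉ VA := Finset.disjoint_right.mp hABdisj hvB
          have hnS : v ∉ S := fun h => hnotA (hSA h)
          have hnR : v ∉ R := fun h => hnotA (hRA h)
          have hnS' : v ∉ S' := Finset.disjoint_right.mp hd' hvR'
          have h8 := hineq v
          simp only [qvec8, pvec8, rvec, if_pos hvR', if_neg hnS, if_neg hnR, if_neg hnS',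
            Fin.forall_fin_succ, Fin.forall_fin_zero_pi, IsEmpty.forall_iff, Matrix.cons_val_one, Matrix.head_cons,
            Matrix.cons_val_zero, Matrix.cons_val_succ] at h8
          omega
    · show (VA ∩ (S ∪ S')).Nonempty
      rw [hAS]; exact hSne
    · show (VA ∩ (R ∪ R')).Nonempty
      rw [hAR]; exact hRne
    · show (VB ∩ (S ∪ S')).Nonempty
      rw [hBS]; exact hS'ne
    · show (VB ∩ (R ∪ R')).Nonempty
      rw [hBR]; exact hR'ne
    · simp [hAS, hAR, hBS, hBR]

/-- the map `(V_L, V_R) ↦ ((V_A ∩ V_L, V_A ∩ V_R), (V_B ∩ V_L, V_B ∩ V_R))`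
is a bijection from the set of feasible interval-constrained cuts of `G` in which all four
intersections are nonempty onto the set of pairs of proper bipartitions `((S, R), (S', R'))`
of `V_A` and `V_B` with `q_S ≥ p_{S'} + r`; in particular the two sets have equal
cardinality. -/
theorem stmt_14 (G : SimpleGraph V) [DecidableRel G.Adj]
    (n : ℕ) (hn : n = Fintype.card V)
    (a' a'' b' b'' c' c'' d' d'' : V → ℕ)
    (ha' : ∀ v, a' v ≤ n) (ha'' : ∀ v, a'' v ≤ n) (hb' : ∀ v, b' v ≤ n) (hb'' : ∀ v, b'' v ≤ n)
    (hc' : ∀ v, c' v ≤ n) (hc'' : ∀ v, c'' v ≤ n) (hd' : ∀ v, d' v ≤ n) (hd'' : ∀ v, d'' v ≤ n)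
    (VA VB : Finset V) (hABdisj : Disjoint VA VB) (hABuniv : VA ∪ VB = Finset.univ) :
    Set.BijOn
      (fun P : Finset V × Finset V => ((VA ∩ P.1, VA ∩ P.2), (VB ∩ P.1, VB ∩ P.2)))
      {P : Finset V × Finset V |
        IsFeasibleCut G a' a'' b' b'' c' c'' d' d'' P.1 P.2 ∧
        (VA ∩ P.1).Nonempty ∧ (VA ∩ P.2).Nonempty ∧
        (VB ∩ P.1).Nonempty ∧ (VB ∩ P.2).Nonempty}
      {Q : (Finset V × Finset V) × (Finset V × Finset V) |
        (Disjoint Q.1.1 Q.1.2 ∧ Q.1.1 ∪ Q.1.2 = VA ∧ Q.1.1.Nonempty ∧ Q.1.2.Nonempty) ∧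
        (Disjoint Q.2.1 Q.2.2 ∧ Q.2.1 ∪ Q.2.2 = VB ∧ Q.2.1.Nonempty ∧ Q.2.2.Nonempty) ∧
        (∀ v : V, ∀ k : Fin 8,
          pvec8 G n Q.2.1 Q.2.2 v k + rvec a' a'' b' b'' c' c'' d' d'' v k ≤
            qvec8 G n Q.1.1 Q.1.2 v k)} ∧
    Set.ncard {P : Finset V × Finset V |
        IsFeasibleCut G a' a'' b' b'' c' c'' d' d'' P.1 P.2 ∧
        (VA ∩ P.1).Nonempty ∧ (VA ∩ P.2).Nonempty ∧
        (VB ∩ P.1).Nonempty ∧ (VB ∩ P.2).Nonempty} =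
      Set.ncard {Q : (Finset V × Finset V) × (Finset V × Finset V) |
        (Disjoint Q.1.1 Q.1.2 ∧ Q.1.1 ∪ Q.1.2 = VA ∧ Q.1.1.Nonempty ∧ Q.1.2.Nonempty) ∧
        (Disjoint Q.2.1 Q.2.2 ∧ Q.2.1 ∪ Q.2.2 = VB ∧ Q.2.1.Nonempty ∧ Q.2.2.Nonempty) ∧
        (∀ v : V, ∀ k : Fin 8,
          pvec8 G n Q.2.1 Q.2.2 v k + rvec a' a'' b' b'' c' c'' d' d'' v k ≤
            qvec8 G n Q.1.1 Q.1.2 v k)} := by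
  have hbij := aux_bij G n hn a' a'' b' b'' c' c'' d' d'' ha' ha'' hb' hb'' hc' hc'' hd' hd''
    VA VB hABdisj hABuniv
  refine ⟨hbij, ?_⟩
  rw [← hbij.image_eq, Set.ncard_image_of_injOn hbij.injOn]
end
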